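/- arXiv:0903.0762 — 2 statements merged into one kernel-verified Lean document; each statement's English description precedes it below -/
import Mathlib

section
/- Let Λ be an Artinian algebra and let 0 → A → B → C → 0 be a non-split short exact sequence of finitely generated Λ-modules. If C is indecomposable, then the monomorphism g: A → B is left minimal; if A is indecomposable, then the epimorphism f: B → C is right minimal. -/
set_option synthInstance.maxHeartbeats 1000000
set_option maxHeartbeats 1000000
open CategoryTheory

namespace Paper

variable (Λ : Type) [Ring Λ]

/-- `extZero Λ n X Y` means `Ext^n_Λ(X, Y) = 0`. -/
noncomputable def extZero (n : ℕ) (X Y : ModuleCat.{0} Λ) : Prop :=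
  letI : HasDerivedCategory (ModuleCat.{0} Λ) := HasDerivedCategory.standard _
  haveI : HasExt.{1} (ModuleCat.{0} Λ) := hasExt_of_hasDerivedCategory _
  Subsingleton (Abelian.Ext.{1} X Y n)

/-- projective dimension at most `n`, characterized by vanishing of `Ext^{n+1}(M, -)`. -/
noncomputable def pdLE (M : ModuleCat.{0} Λ) (n : ℕ) : Prop :=
  ∀ N : ModuleCat.{0} Λ, extZero Λ (n + 1) M N

noncomputable def pdEq (M : ModuleCat.{0} Λ) (n : ℕ) : Prop :=
  pdLE Λ M n ∧ ∀ m : ℕ, pdLE Λ M m → n ≤ m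

/-- injective dimension at most `n`, characterized by vanishing of `Ext^{n+1}(-, M)`. -/
noncomputable def idLE (M : ModuleCat.{0} Λ) (n : ℕ) : Prop :=
  ∀ N : ModuleCat.{0} Λ, extZero Λ (n + 1) N M

noncomputable def idEq (M : ModuleCat.{0} Λ) (n : ℕ) : Prop :=
  idLE Λ M n ∧ ∀ m : ℕ, idLE Λ M m → n ≤ m

noncomputable def glDimLE (n : ℕ) : Prop := ∀ M : ModuleCat.{0} Λ, pdLE Λ M n

noncomputable def glDimEq (n : ℕ) : Prop :=
  glDimLE Λ n ∧ ∀ m : ℕ, glDimLE Λ m → n ≤ m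

section Maps

variable {M N : Type} [AddCommGroup M] [Module Λ M] [AddCommGroup N] [Module Λ N]

/-- A homomorphism `f : M → N` is left minimal if every `g : N → N` with `g ∘ f = f`
is an automorphism. -/
def IsLeftMinimal (f : M →ₗ[Λ] N) : Prop :=
  ∀ g : N →ₗ[Λ] N, g.comp f = f → Function.Bijective g

/-- A homomorphism `f : M → N` is right minimal if every `h : M → M` with `f ∘ h = f`
is an automorphism. -/
def IsRightMinimal (f : M →ₗ[Λ] N) : Prop :=
  ∀ h : M →ₗ[Λ] M, f.comp h = f → Function.Bijective h

/-- `g, f` form a short exact sequence `0 → A → B → C → 0`. -/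
def SES {A B C : Type} [AddCommGroup A] [Module Λ A] [AddCommGroup B] [Module Λ B]
    [AddCommGroup C] [Module Λ C] (g : A →ₗ[Λ] B) (f : B →ₗ[Λ] C) : Prop :=
  Function.Injective g ∧ Function.Surjective f ∧ LinearMap.range g = LinearMap.ker f

/-- The monomorphism `g : A → B` splits. -/
def Splits {A B : Type} [AddCommGroup A] [Module Λ A] [AddCommGroup B] [Module Λ B]
    (g : A →ₗ[Λ] B) : Prop :=
  ∃ r : B →ₗ[Λ] A, r.comp g = LinearMap.id

/-- `X` is (isomorphic to) a direct summand of `Y`. -/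
def IsSummand (X Y : Type) [AddCommGroup X] [Module Λ X] [AddCommGroup Y] [Module Λ Y] :
    Prop :=
  ∃ (i : X →ₗ[Λ] Y) (p : Y →ₗ[Λ] X), p.comp i = LinearMap.id

/-- An indecomposable module: non-zero, and the only idempotent endomorphisms are `0` and `1`. -/
def Indecomposable (M : Type) [AddCommGroup M] [Module Λ M] : Prop :=
  Nontrivial M ∧ ∀ e : M →ₗ[Λ] M, e.comp e = e → e = 0 ∨ e = LinearMap.id

/-- An essential submodule. -/
def Essential (N : Submodule Λ M) : Prop := ∀ K : Submodule Λ M, K ⊓ N = ⊥ → K = ⊥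

/-- A superfluous (small) submodule. -/
def Superfluous (N : Submodule Λ M) : Prop := ∀ K : Submodule Λ M, K ⊔ N = ⊤ → K = ⊤

/-- `f : M → I` is an injective envelope of `M`. -/
def IsInjEnvelope {I : Type} [AddCommGroup I] [Module Λ I] (f : M →ₗ[Λ] I) : Prop :=
  Module.Injective Λ I ∧ Function.Injective f ∧ Essential Λ (LinearMap.range f)

end Maps

/-- Auslander's 1-Gorenstein: the injective envelope of the left regular module is projective. -/
def AuslanderOneGorenstein : Prop :=
  ∀ (I : ModuleCat.{0} Λ) (f : Λ →ₗ[Λ] I), IsInjEnvelope Λ f → Module.Projective Λ I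

/-- membership in `add (Λ ⊕ D(Λ^op))`: direct summands of (finite direct sums of)
finitely generated projective and injective modules. -/
def InAddProjInj (X : ModuleCat.{0} Λ) : Prop :=
  ∃ (P I : ModuleCat.{0} Λ), Module.Projective Λ P ∧ Module.Finite Λ P ∧
    Module.Injective Λ I ∧ Module.Finite Λ I ∧ IsSummand Λ X (P × I)

/-- `D` is a maximal `n`-orthogonal subcategory of `mod Λ`. -/
noncomputable def IsMaxNOrthogonal (D : ModuleCat.{0} Λ → Prop) (n : ℕ) : Prop :=
  (∀ X, D X → Module.Finite Λ X) ∧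
  ∀ X : ModuleCat.{0} Λ, Module.Finite Λ X →
    ((D X ↔ ∀ Y, D Y → ∀ i : ℕ, 1 ≤ i → i ≤ n → extZero Λ i X Y) ∧
     (D X ↔ ∀ Y, D Y → ∀ i : ℕ, 1 ≤ i → i ≤ n → extZero Λ i Y X))

/-- `Λ` admits the trivial maximal `n`-orthogonal subcategory `add (Λ ⊕ D(Λ^op))`. -/
noncomputable def HasTrivialMaxOrth (n : ℕ) : Prop :=
  IsMaxNOrthogonal Λ (InAddProjInj Λ) n

/-- a right `𝒞`-approximation. -/
def IsRightApprox (C : ModuleCat.{0} Λ → Prop) {X D : ModuleCat.{0} Λ} (f : X ⟶ D) : Prop :=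
  C X ∧ ∀ C' : ModuleCat.{0} Λ, C C' → ∀ g : C' ⟶ D, ∃ h : C' ⟶ X, h ≫ f = g

/-- a left `𝒞`-approximation. -/
def IsLeftApprox (C : ModuleCat.{0} Λ → Prop) {D X : ModuleCat.{0} Λ} (f : D ⟶ X) : Prop :=
  C X ∧ ∀ C' : ModuleCat.{0} Λ, C C' → ∀ g : D ⟶ C', ∃ h : X ⟶ C', f ≫ h = g

/-- A minimal injective resolution `0 → M → I⁰ → I¹ → ⋯`. -/
structure MinInjRes (M : ModuleCat.{0} Λ) where
  I : ℕ → ModuleCat.{0} Λ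
  ι : M ⟶ I 0
  d : ∀ i : ℕ, I i ⟶ I (i + 1)
  inj : ∀ i, Module.Injective Λ (I i)
  mono : Function.Injective ι
  exact0 : LinearMap.range ι.hom = LinearMap.ker (d 0).hom
  exact : ∀ i, LinearMap.range (d i).hom = LinearMap.ker (d (i + 1)).hom
  ess0 : Essential Λ (LinearMap.range ι.hom)
  ess : ∀ i, Essential Λ (LinearMap.range (d i).hom)

/-- A minimal projective resolution `⋯ → P₁ → P₀ → M → 0`. -/
structure MinProjRes (M : ModuleCat.{0} Λ) where
  P : ℕ → ModuleCat.{0} Λ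
  π : P 0 ⟶ M
  d : ∀ i : ℕ, P (i + 1) ⟶ P i
  proj : ∀ i, Module.Projective Λ (P i)
  epi : Function.Surjective π
  exact0 : LinearMap.range (d 0).hom = LinearMap.ker π.hom
  exact : ∀ i, LinearMap.range (d (i + 1)).hom = LinearMap.ker (d i).hom
  sup0 : Superfluous Λ (LinearMap.ker π.hom)
  sup : ∀ i, Superfluous Λ (LinearMap.ker (d i).hom)

/-- The map `Hom(N, Λ) → Hom(M, Λ)` induced by `f : M → N`; it is `Λ^op`-linear. -/
def dualMap {M N : Type} [AddCommGroup M] [Module Λ M] [AddCommGroup N] [Module Λ N]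
    (f : M →ₗ[Λ] N) : (N →ₗ[Λ] Λ) →ₗ[Λᵐᵒᵖ] (M →ₗ[Λ] Λ) where
  toFun g := g.comp f
  map_add' a b := by ext; simp
  map_smul' a b := by ext; simp

/-- `Ext¹_Λ(M, Λ)` as a `Λ^op`-module, computed from a projective resolution of `M`. -/
def ext1C {M : ModuleCat.{0} Λ} (rs : MinProjRes Λ M) : Type :=
  letI : HasQuotient (↥(LinearMap.ker (dualMap Λ (rs.d 1).hom)))
      (Submodule Λᵐᵒᵖ ↥(LinearMap.ker (dualMap Λ (rs.d 1).hom))) := Submodule.hasQuotient (R := Λᵐᵒᵖ) (M := ↥(LinearMap.ker (dualMap Λ (rs.d 1).hom)))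
  ↥(LinearMap.ker (dualMap Λ (rs.d 1).hom)) ⧸
    (LinearMap.range (dualMap Λ (rs.d 0).hom)).comap (LinearMap.ker (dualMap Λ (rs.d 1).hom)).subtype

noncomputable instance {M : ModuleCat.{0} Λ} (rs : MinProjRes Λ M) :
    AddCommGroup (ext1C Λ rs) := by unfold ext1C; infer_instance

noncomputable instance {M : ModuleCat.{0} Λ} (rs : MinProjRes Λ M) :
    Module Λᵐᵒᵖ (ext1C Λ rs) := by unfold ext1C; infer_instance

/-- `Ext²_Λ(M, Λ)` as a `Λ^op`-module, computed from a projective resolution of `M`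
(assuming `pd M ≤ 2`, so that `P₃* → P₂*` has image `im(P₁* → P₂*)`). -/
def ext2C {M : ModuleCat.{0} Λ} (rs : MinProjRes Λ M) : Type :=
  letI : HasQuotient (↥(rs.P 2) →ₗ[Λ] Λ) (Submodule Λᵐᵒᵖ (↥(rs.P 2) →ₗ[Λ] Λ)) :=
    Submodule.hasQuotient
  (↥(rs.P 2) →ₗ[Λ] Λ) ⧸ LinearMap.range (dualMap Λ (rs.d 1).hom)

noncomputable instance {M : ModuleCat.{0} Λ} (rs : MinProjRes Λ M) :
    AddCommGroup (ext2C Λ rs) := by unfold ext2C; infer_instance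

noncomputable instance {M : ModuleCat.{0} Λ} (rs : MinProjRes Λ M) :
    Module Λᵐᵒᵖ (ext2C Λ rs) := by unfold ext2C; infer_instance

/-- `X` belongs to `add T`. -/
def InAdd (T : Type) [AddCommGroup T] [Module Λ T] (X : Type) [AddCommGroup X]
    [Module Λ X] : Prop :=
  ∃ n : ℕ, IsSummand Λ X (Fin n → T)

/-- A (classical) tilting module. -/
noncomputable def IsTiltingModule (T : Type) [AddCommGroup T] [Module Λ T] : Prop :=
  Module.Finite Λ T ∧ pdLE Λ (ModuleCat.of Λ T) 1 ∧
    extZero Λ 1 (ModuleCat.of Λ T) (ModuleCat.of Λ T) ∧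
    ∃ (T0 T1 : ModuleCat.{0} Λ) (g : Λ →ₗ[Λ] T0) (f : T0 →ₗ[Λ] T1),
      InAdd Λ T T0 ∧ InAdd Λ T T1 ∧ SES Λ g f

/-- Witness that `Λ` is a tilted algebra: `Λ ≅ End_H(T)` for a tilting module `T` over a
hereditary Artinian algebra `H`. -/
structure TiltedWitness : Type 1 where
  H : Type
  [ringH : Ring H]
  R : Type
  [commR : CommRing R]
  [artR : IsArtinianRing R]
  [algRH : Algebra R H]
  finRH : Module.Finite R H
  hereditary : glDimLE H 1
  T : Type
  [acgT : AddCommGroup T]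
  [modT : Module H T]
  tilting : IsTiltingModule H T
  iso : Λ ≃+* Module.End H T

noncomputable def IsTiltedAlgebra : Prop := Nonempty (TiltedWitness Λ)

/-- An almost hereditary algebra. -/
noncomputable def AlmostHereditary : Prop :=
  glDimLE Λ 2 ∧ ∀ M : ModuleCat.{0} Λ, Module.Finite Λ M → Indecomposable Λ M →
    (pdLE Λ M 1 ∨ idLE Λ M 1)

theorem isNoetherian_and_isArtinian_of_finite (R : Type) [CommRing R] [IsArtinianRing R]
    [Algebra R Λ] [Module.Finite R Λ] (M : Type) [AddCommGroup M] [Module Λ M]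
    [Module.Finite Λ M] : IsNoetherian Λ M ∧ IsArtinian Λ M := by
  let _ : Module R M := Module.compHom M (algebraMap R Λ)
  have : IsScalarTower R Λ M := IsScalarTower.of_algebraMap_smul fun _ _ ↦ rfl
  have : Module.Finite R M := Module.Finite.trans Λ M
  exact ⟨isNoetherian_of_tower R inferInstance, isArtinian_of_tower R inferInstance⟩

variable {Λ}

theorem LinearMap.isNilpotent_comp_swap {M N : Type} [AddCommGroup M] [Module Λ M]
    [AddCommGroup N] [Module Λ N] {φ : M →ₗ[Λ] N} {ψ : N →ₗ[Λ] M}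
    (h : IsNilpotent (φ ∘ₗ ψ)) : IsNilpotent (ψ ∘ₗ φ) := by
  obtain ⟨n, hn⟩ := h
  have key : ∀ k : ℕ, (ψ ∘ₗ φ) ^ (k + 1) = ψ ∘ₗ ((φ ∘ₗ ψ) ^ k) ∘ₗ φ := by
    intro k
    induction k with
    | zero => rfl
    | succ k ih =>
      rw [pow_succ, ih, pow_succ]
      rfl
  exact ⟨n + 1, by rw [key, hn, LinearMap.zero_comp, LinearMap.comp_zero]⟩

namespace Indecomposable

variable {M : Type} [AddCommGroup M] [Module Λ M]

theorem eq_bot_or_eq_bot_of_isCompl (hM : Indecomposable Λ M) {p q : Submodule Λ M}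
    (hpq : IsCompl p q) : p = ⊥ ∨ q = ⊥ := by
  rcases hM.2 _ (Submodule.isIdempotentElem_projection hpq) with h | h
  · left
    rw [← Submodule.range_projection hpq, h, LinearMap.range_zero]
  · right
    rw [← Submodule.ker_projection hpq, h, LinearMap.ker_id]

/-- Fitting's lemma. -/
theorem isNilpotent_or_bijective [IsNoetherian Λ M] [IsArtinian Λ M]
    (hM : Indecomposable Λ M) (φ : Module.End Λ M) : IsNilpotent φ ∨ Function.Bijective φ := by
  obtain ⟨n, hn⟩ := Filter.eventually_atTop.mp φ.eventually_isCompl_ker_pow_range_pow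
  rcases hM.eq_bot_or_eq_bot_of_isCompl (hn (n + 1) n.le_succ) with hker | hrange
  · right
    refine IsArtinian.bijective_of_injective_endomorphism φ
      (Function.Injective.of_comp (f := φ ^ n) ?_)
    rw [← Module.End.coe_mul, ← pow_succ, ← LinearMap.ker_eq_bot, hker]
  · exact Or.inl ⟨n + 1, LinearMap.range_eq_bot.mp hrange⟩

end Indecomposable

namespace SES

variable {A B C N : Type} [AddCommGroup A] [Module Λ A] [AddCommGroup B] [Module Λ B]
  [AddCommGroup C] [Module Λ C] [AddCommGroup N] [Module Λ N] {g : A →ₗ[Λ] B} {f : B →ₗ[Λ] C}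

theorem exact (h : SES Λ g f) : Function.Exact g f :=
  LinearMap.exact_iff.mpr h.2.2.symm

theorem exists_comp_eq_of_comp_eq_zero (h : SES Λ g f) (φ : B →ₗ[Λ] N) (hφ : φ ∘ₗ g = 0) :
    ∃ t : C →ₗ[Λ] N, t ∘ₗ f = φ := by
  have hker : LinearMap.range g ≤ LinearMap.ker φ := by
    rintro _ ⟨a, rfl⟩
    exact LinearMap.congr_fun hφ a
  refine ⟨(LinearMap.range g).liftQ φ hker ∘ₗ (h.exact.linearEquivOfSurjective h.2.1).symm, ?_⟩
  ext b
  simp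

theorem exists_eq_comp_of_comp_eq_zero (h : SES Λ g f) (φ : N →ₗ[Λ] B) (hφ : f ∘ₗ φ = 0) :
    ∃ s : N →ₗ[Λ] A, g ∘ₗ s = φ := by
  have hrange : ∀ x, φ x ∈ LinearMap.range g := fun x ↦
    (h.exact (φ x)).mp (LinearMap.congr_fun hφ x)
  refine ⟨(LinearEquiv.ofInjective g h.1).symm ∘ₗ LinearMap.codRestrict _ φ hrange, ?_⟩
  ext x
  simp

theorem splits_of_comp_eq_id (h : SES Λ g f) {s : C →ₗ[Λ] B} (hs : f ∘ₗ s = LinearMap.id) :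
    Splits Λ g :=
  ((h.exact.split_tfae h.1 h.2.1).out 0 1).mp (show ∃ l, f ∘ₗ l = LinearMap.id from ⟨s, hs⟩)

/-- Writing `u = 1 + t ∘ f`, Fitting's lemma for `f ∘ t` on `C` either makes `t ∘ f` nilpotent
or gives a section of `f`. -/
theorem isLeftMinimal [IsNoetherian Λ C] [IsArtinian Λ C] (h : SES Λ g f) (hns : ¬ Splits Λ g)
    (hC : Indecomposable Λ C) : IsLeftMinimal Λ g := by
  intro u hu
  obtain ⟨t, ht⟩ := h.exists_comp_eq_of_comp_eq_zero (u - LinearMap.id)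
    (by rw [LinearMap.sub_comp, hu, LinearMap.id_comp, sub_self])
  rcases hC.isNilpotent_or_bijective (f ∘ₗ t) with hnil | hbij
  · have hu' : u = 1 + t ∘ₗ f := by rw [ht, Module.End.one_eq_id, add_sub_cancel]
    rw [hu']
    exact (Module.End.isUnit_iff _).mp (LinearMap.isNilpotent_comp_swap hnil).isUnit_one_add
  · let e := LinearEquiv.ofBijective (f ∘ₗ t) hbij
    refine absurd (h.splits_of_comp_eq_id (s := t ∘ₗ e.symm.toLinearMap) ?_) hns
    ext c
    exact e.apply_symm_apply c

/-- Writing `v = 1 + g ∘ s`, Fitting's lemma for `s ∘ g` on `A` either makes `g ∘ s` nilpotent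
or gives a retraction of `g`. -/
theorem isRightMinimal [IsNoetherian Λ A] [IsArtinian Λ A] (h : SES Λ g f) (hns : ¬ Splits Λ g)
    (hA : Indecomposable Λ A) : IsRightMinimal Λ f := by
  intro v hv
  obtain ⟨s, hs⟩ := h.exists_eq_comp_of_comp_eq_zero (v - LinearMap.id)
    (by rw [LinearMap.comp_sub, hv, LinearMap.comp_id, sub_self])
  rcases hA.isNilpotent_or_bijective (s ∘ₗ g) with hnil | hbij
  · have hv' : v = 1 + g ∘ₗ s := by rw [hs, Module.End.one_eq_id, add_sub_cancel]
    rw [hv']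
    exact (Module.End.isUnit_iff _).mp (LinearMap.isNilpotent_comp_swap hnil).isUnit_one_add
  · let e := LinearEquiv.ofBijective (s ∘ₗ g) hbij
    refine absurd ⟨e.symm.toLinearMap ∘ₗ s, ?_⟩ hns
    ext a
    exact e.symm_apply_apply a

end SES

theorem statement0_general (Λ R : Type) [CommRing R] [IsArtinianRing R] [Ring Λ] [Algebra R Λ]
    [Module.Finite R Λ]
    (A B C : Type) [AddCommGroup A] [Module Λ A] [Module.Finite Λ A]
    [AddCommGroup B] [Module Λ B]
    [AddCommGroup C] [Module Λ C] [Module.Finite Λ C]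
    (g : A →ₗ[Λ] B) (f : B →ₗ[Λ] C) (hses : SES Λ g f) (hns : ¬ Splits Λ g) :
    (Indecomposable Λ C → IsLeftMinimal Λ g) ∧
    (Indecomposable Λ A → IsRightMinimal Λ f) := by
  obtain ⟨_, _⟩ := isNoetherian_and_isArtinian_of_finite Λ R A
  obtain ⟨_, _⟩ := isNoetherian_and_isArtinian_of_finite Λ R C
  exact ⟨hses.isLeftMinimal hns, hses.isRightMinimal hns⟩

theorem statement0 (Λ R : Type) [CommRing R] [IsArtinianRing R] [Ring Λ] [Algebra R Λ]
    [Module.Finite R Λ]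
    (A B C : Type) [AddCommGroup A] [Module Λ A] [Module.Finite Λ A]
    [AddCommGroup B] [Module Λ B] [Module.Finite Λ B]
    [AddCommGroup C] [Module Λ C] [Module.Finite Λ C]
    (g : A →ₗ[Λ] B) (f : B →ₗ[Λ] C) (hses : SES Λ g f) (hns : ¬ Splits Λ g) :
    (Indecomposable Λ C → IsLeftMinimal Λ g) ∧
    (Indecomposable Λ A → IsRightMinimal Λ f) :=
  statement0_general Λ R A B C g f hses hns

end Paper
end

section
/- Let Λ be an Artinian algebra and let 0 → A →g B →f C → 0 be a non-split short exact sequence of finitely generated Λ-modules. If f is right minimal, then Ext¹_Λ(C, A') ≠ 0 for every non-zero direct summand A' of A. -/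
set_option synthInstance.maxHeartbeats 1000000
set_option maxHeartbeats 1000000
open CategoryTheory

namespace Paper

variable (Λ : Type) [Ring Λ]

/-! If `Ext¹(C, A') = 0` for a summand `A'` of `A` with inclusion `i` and projection `p`,
then `p` extends along `g` to some `t : B → A'`. The endomorphism `1 - g i t` of `B` is then
compatible with `f` but kills `g(i(A'))`, so right minimality of `f` forces `A' = 0`. -/

section ExtensionAlongMonomorphisms

open Abelian

universe w v u

variable {𝒞 : Type u} [Category.{v} 𝒞] [Abelian 𝒞] [HasExt.{w} 𝒞]

lemma _root_.CategoryTheory.ShortComplex.ShortExact.exists_comp_eq_of_subsingleton_ext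
    {S : ShortComplex 𝒞} (hS : S.ShortExact) {Y : 𝒞} [Subsingleton (Ext S.X₃ Y 1)] (φ : S.X₁ ⟶ Y) :
    ∃ t : S.X₂ ⟶ Y, S.f ≫ t = φ := by
  obtain ⟨x, hx⟩ := Ext.contravariant_sequence_exact₁ hS Y (Ext.mk₀ φ) rfl
    (Subsingleton.elim _ _)
  obtain ⟨t, rfl⟩ := (Ext.mk₀_bijective _ _).2 x
  exact ⟨t, Ext.mk₀_bijective _ _ |>.1 (by rwa [Ext.mk₀_comp_mk₀] at hx)⟩

end ExtensionAlongMonomorphisms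

section SES

variable {Λ} {A B C : Type} [AddCommGroup A] [Module Λ A] [AddCommGroup B] [Module Λ B]
  [AddCommGroup C] [Module Λ C] {g : A →ₗ[Λ] B} {f : B →ₗ[Λ] C}

lemma SES.comp_eq_zero (hses : SES Λ g f) : f ∘ₗ g = 0 := by
  ext a
  exact (LinearMap.mem_ker.1 (hses.2.2 ▸ LinearMap.mem_range_self g a) :)

lemma SES.shortExact (hses : SES Λ g f) :
    (ShortComplex.mk (ModuleCat.ofHom g) (ModuleCat.ofHom f)
      (ModuleCat.hom_ext hses.comp_eq_zero)).ShortExact where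
  exact := (ShortComplex.moduleCat_exact_iff _).2 fun b hb =>
    (hses.2.2.symm ▸ hb : b ∈ LinearMap.range g)
  mono_f := (ModuleCat.mono_iff_injective _).2 hses.1
  epi_g := (ModuleCat.epi_iff_surjective _).2 hses.2.1

lemma SES.exists_comp_eq_of_extZero_one (hses : SES Λ g f) {Y : ModuleCat.{0} Λ}
    (hext : extZero Λ 1 (ModuleCat.of Λ C) Y) (p : A →ₗ[Λ] Y) :
    ∃ t : B →ₗ[Λ] Y, t ∘ₗ g = p := by
  let : HasDerivedCategory (ModuleCat.{0} Λ) := HasDerivedCategory.standard _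
  have : HasExt.{1} (ModuleCat.{0} Λ) := hasExt_of_hasDerivedCategory _
  have : Subsingleton (Abelian.Ext (ModuleCat.of Λ C) Y 1) := hext
  obtain ⟨t, ht⟩ := hses.shortExact.exists_comp_eq_of_subsingleton_ext (ModuleCat.ofHom p)
  exact ⟨t.hom, congrArg ModuleCat.Hom.hom ht⟩

end SES

section RightMinimal

variable {Λ} {A A' B C : Type} [AddCommGroup A] [Module Λ A] [AddCommGroup A'] [Module Λ A']
  [AddCommGroup B] [Module Λ B] [AddCommGroup C] [Module Λ C]

lemma IsRightMinimal.subsingleton_of_comp_eq {g : A →ₗ[Λ] B} {f : B →ₗ[Λ] C}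
    (hmin : IsRightMinimal Λ f) (hfg : f ∘ₗ g = 0) (hg : Function.Injective g)
    {i : A' →ₗ[Λ] A} {p : A →ₗ[Λ] A'} (hpi : p ∘ₗ i = LinearMap.id)
    {t : B →ₗ[Λ] A'} (ht : t ∘ₗ g = p) : Subsingleton A' := by
  set h : B →ₗ[Λ] B := LinearMap.id - g ∘ₗ i ∘ₗ t
  have hfh : f ∘ₗ h = f := by
    rw [LinearMap.comp_sub, ← LinearMap.comp_assoc, hfg, LinearMap.zero_comp, sub_zero,
      LinearMap.comp_id]
  have hh : h ∘ₗ (g ∘ₗ i) = 0 := by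
    rw [LinearMap.sub_comp, LinearMap.id_comp, LinearMap.comp_assoc, LinearMap.comp_assoc,
      ← LinearMap.comp_assoc i g t, ht, hpi, LinearMap.comp_id, sub_self]
  have hi : ∀ a, i a = 0 := fun a =>
    hg <| (hmin h hfh).1 <| by simpa using LinearMap.congr_fun hh a
  refine subsingleton_of_forall_eq 0 fun a => ?_
  rw [← LinearMap.id_apply (R := Λ) a, ← hpi, LinearMap.comp_apply, hi, map_zero]

end RightMinimal

theorem statement2_general (Λ : Type) [Ring Λ]
    (A B C : Type) [AddCommGroup A] [Module Λ A]
    [AddCommGroup B] [Module Λ B]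
    [AddCommGroup C] [Module Λ C]
    (g : A →ₗ[Λ] B) (f : B →ₗ[Λ] C) (hses : SES Λ g f)
    (hmin : IsRightMinimal Λ f) :
    ∀ A' : ModuleCat.{0} Λ, Nontrivial A' → IsSummand Λ A' A →
      ¬ extZero Λ 1 (ModuleCat.of Λ C) A' := by
  rintro A' hA' ⟨i, p, hpi⟩ hext
  obtain ⟨t, ht⟩ := hses.exists_comp_eq_of_extZero_one hext p
  exact not_subsingleton A' (hmin.subsingleton_of_comp_eq hses.comp_eq_zero hses.1 hpi ht)

theorem statement2 (Λ R : Type) [CommRing R] [IsArtinianRing R] [Ring Λ] [Algebra R Λ]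
    [Module.Finite R Λ]
    (A B C : Type) [AddCommGroup A] [Module Λ A] [Module.Finite Λ A]
    [AddCommGroup B] [Module Λ B] [Module.Finite Λ B]
    [AddCommGroup C] [Module Λ C] [Module.Finite Λ C]
    (g : A →ₗ[Λ] B) (f : B →ₗ[Λ] C) (hses : SES Λ g f) (hns : ¬ Splits Λ g)
    (hmin : IsRightMinimal Λ f) :
    ∀ A' : ModuleCat.{0} Λ, Nontrivial A' → IsSummand Λ A' A →
      ¬ extZero Λ 1 (ModuleCat.of Λ C) A' :=
  statement2_general Λ A B C g f hses hmin

end Paper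
end
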